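/- Let δ ∈ (0,1] and ε > 0. For every integer T with T ≥ 2 · t_mix(ε/2)² / (ε δ) and every integer k with δ ≤ k/T ≤ 1, one has ‖π₀ P_{1/T} P_{2/T} ⋯ P_{k/T} − π_{k/T}‖_TV ≤ ε. -/
import Mathlib


open Matrix BigOperators

/-- A row-stochastic matrix: nonnegative entries, each row sums to 1. -/
def IsStochastic {n : ℕ} (P : Matrix (Fin n) (Fin n) ℝ) : Prop :=
  (∀ i j, 0 ≤ P i j) ∧ ∀ i, ∑ j, P i j = 1

/-- Irreducibility: every state can reach every other state. -/
def MCIrreducible {n : ℕ} (P : Matrix (Fin n) (Fin n) ℝ) : Prop :=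
  ∀ i j, ∃ m : ℕ, 0 < (P ^ m) i j

/-- Aperiodicity (for a finite chain): every state has eventually positive return
probabilities. -/
def MCAperiodic {n : ℕ} (P : Matrix (Fin n) (Fin n) ℝ) : Prop :=
  ∀ i : Fin n, ∃ N : ℕ, ∀ m : ℕ, N ≤ m → 0 < (P ^ m) i i

/-- A probability (row) vector. -/
def IsProbVec {n : ℕ} (v : Fin n → ℝ) : Prop :=
  (∀ i, 0 ≤ v i) ∧ ∑ i, v i = 1

/-- Total variation distance between two vectors. -/
noncomputable def tvDist {n : ℕ} (μ ν : Fin n → ℝ) : ℝ :=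
  (1 / 2) * ∑ i, |μ i - ν i|

/-- Euclidean norm on ℝⁿ. -/
noncomputable def euclNorm {n : ℕ} (v : Fin n → ℝ) : ℝ :=
  Real.sqrt (∑ i, (v i) ^ 2)

/-- Mixing time of `P` with stationary distribution `π`. -/
noncomputable def mixingTime {n : ℕ} (P : Matrix (Fin n) (Fin n) ℝ)
    (π : Fin n → ℝ) (ε : ℝ) : ℕ :=
  sInf {T : ℕ | ∀ ν : Fin n → ℝ, IsProbVec ν → tvDist (ν ᵥ* (P ^ T)) π ≤ ε}

/-- The interpolation `P_t = (1-t)·P₀ + t·P₁`. -/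
noncomputable def Pt {n : ℕ} (P₀ P₁ : Matrix (Fin n) (Fin n) ℝ) (t : ℝ) :
    Matrix (Fin n) (Fin n) ℝ :=
  (1 - t) • P₀ + t • P₁

/-- The ordered product `P_{(j+1)/T} P_{(j+2)/T} ⋯ P_{k/T}` (identity if `j ≥ k`). -/
noncomputable def prodSeg {n : ℕ} (P₀ P₁ : Matrix (Fin n) (Fin n) ℝ) (T j k : ℕ) :
    Matrix (Fin n) (Fin n) ℝ :=
  ((List.range (k - j)).map (fun i => Pt P₀ P₁ (((j : ℝ) + (i : ℝ) + 1) / (T : ℝ)))).prod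

/-- The ordered product `P_{1/T} P_{2/T} ⋯ P_{k/T}`. -/
noncomputable def adiabProd {n : ℕ} (P₀ P₁ : Matrix (Fin n) (Fin n) ℝ) (T k : ℕ) :
    Matrix (Fin n) (Fin n) ℝ :=
  prodSeg P₀ P₁ T 0 k

/-- Adiabatic time of the adiabatic evolution between `P₀` and `P₁`,
with `π₁` the stationary distribution of `P₁`. -/
noncomputable def adiabaticTime {n : ℕ} (P₀ P₁ : Matrix (Fin n) (Fin n) ℝ)
    (π₁ : Fin n → ℝ) (ε : ℝ) : ℕ :=
  sInf {T' : ℕ | ∀ T : ℕ, T' ≤ T → ∀ ν : Fin n → ℝ, IsProbVec ν →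
    tvDist ((ν ᵥ* P₀) ᵥ* adiabProd P₀ P₁ T T) π₁ ≤ ε}

/-- Stable adiabatic time, where `π s` is the stationary distribution of `P_s`. -/
noncomputable def stableAdiabaticTime {n : ℕ} (P₀ P₁ : Matrix (Fin n) (Fin n) ℝ)
    (π : ℝ → Fin n → ℝ) (ε : ℝ) : ℕ :=
  sInf {T : ℕ | ∀ k : ℕ, 1 ≤ k → k ≤ T →
    tvDist ((π 0) ᵥ* adiabProd P₀ P₁ T k) (π ((k : ℝ) / (T : ℝ))) < ε}

/-- `t_mix(ε) = sup_{s ∈ [0,1]} t_mix(P_s, ε)`, where `π s` is the stationary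
distribution of `P_s`. -/
noncomputable def maxMixingTime {n : ℕ} (P₀ P₁ : Matrix (Fin n) (Fin n) ℝ)
    (π : ℝ → Fin n → ℝ) (ε : ℝ) : ℕ :=
  sSup {m : ℕ | ∃ s ∈ Set.Icc (0 : ℝ) 1, m = mixingTime (Pt P₀ P₁ s) (π s) ε}

/-- `s` is a singular value of `A`: `s ≥ 0` and `s²` is an eigenvalue of `A Aᵀ`
(for a left eigenvector). -/
def IsSingularValue {n : ℕ} (A : Matrix (Fin n) (Fin n) ℝ) (s : ℝ) : Prop :=
  0 ≤ s ∧ ∃ v : Fin n → ℝ, v ≠ 0 ∧ v ᵥ* (A * Aᵀ) = (s ^ 2) • v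

/-- `σ` is the smallest nonzero (positive) singular value of `A`. -/
def IsSmallestPosSingularValue {n : ℕ} (A : Matrix (Fin n) (Fin n) ℝ) (σ : ℝ) : Prop :=
  0 < σ ∧ IsSingularValue A σ ∧ ∀ s : ℝ, 0 < s → IsSingularValue A s → σ ≤ s

lemma probVec_vecMul {n : ℕ} {v : Fin n → ℝ} {A : Matrix (Fin n) (Fin n) ℝ}
    (hv : IsProbVec v) (hA : IsStochastic A) : IsProbVec (v ᵥ* A) := by
  constructor
  · intro j
    simp only [Matrix.vecMul, dotProduct]
    exact Finset.sum_nonneg fun i _ => mul_nonneg (hv.1 i) (hA.1 i j)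
  · rw [show ∑ j, (v ᵥ* A) j = ∑ j, ∑ i, v i * A i j from rfl, Finset.sum_comm]
    simp only [← Finset.mul_sum]
    simp [hA.2, hv.2]

lemma stoch_mul {n : ℕ} {A B : Matrix (Fin n) (Fin n) ℝ}
    (hA : IsStochastic A) (hB : IsStochastic B) : IsStochastic (A * B) := by
  constructor
  · intro i j
    simp only [Matrix.mul_apply]
    exact Finset.sum_nonneg fun l _ => mul_nonneg (hA.1 i l) (hB.1 l j)
  · intro i
    rw [show ∑ j, (A * B) i j = ∑ j, ∑ l, A i l * B l j from rfl, Finset.sum_comm]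
    simp only [← Finset.mul_sum]
    simp [hB.2, hA.2 i]

lemma stoch_one {n : ℕ} : IsStochastic (1 : Matrix (Fin n) (Fin n) ℝ) := by
  constructor
  · intro i j; by_cases h : i = j <;> simp [Matrix.one_apply, h]
  · intro i; simp [Matrix.one_apply]

lemma stoch_pow {n : ℕ} {A : Matrix (Fin n) (Fin n) ℝ} (hA : IsStochastic A) (m : ℕ) :
    IsStochastic (A ^ m) := by
  induction m with
  | zero => simpa using stoch_one
  | succ m ih => rw [pow_succ]; exact stoch_mul ih hA

lemma tvDist_nonneg {n : ℕ} (μ ν : Fin n → ℝ) : 0 ≤ tvDist μ ν := by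
  unfold tvDist
  positivity

lemma tvDist_triangle {n : ℕ} (μ ν ρ : Fin n → ℝ) :
    tvDist μ ρ ≤ tvDist μ ν + tvDist ν ρ := by
  unfold tvDist
  rw [← mul_add, ← Finset.sum_add_distrib]
  have h : ∑ i, |μ i - ρ i| ≤ ∑ i, (|μ i - ν i| + |ν i - ρ i|) :=
    Finset.sum_le_sum fun i _ => abs_sub_le _ _ _
  linarith

lemma tvDist_le_one {n : ℕ} {μ ν : Fin n → ℝ} (hμ : IsProbVec μ) (hν : IsProbVec ν) :
    tvDist μ ν ≤ 1 := by
  unfold tvDist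
  have : ∑ i, |μ i - ν i| ≤ ∑ i, (μ i + ν i) := by
    gcongr with i
    rw [abs_sub_le_iff]
    constructor <;> nlinarith [hμ.1 i, hν.1 i]
  rw [Finset.sum_add_distrib, hμ.2, hν.2] at this
  linarith

/-- TV contraction under right multiplication by a stochastic matrix, with Doeblin
improvement when all entries are ≥ c (c may be 0). -/
lemma tvDist_vecMul_le {n : ℕ} {A : Matrix (Fin n) (Fin n) ℝ} (hA : IsStochastic A)
    {c : ℝ} (hc : 0 ≤ c) (hAc : ∀ i j, c ≤ A i j)
    {μ ν : Fin n → ℝ} (hμ : IsProbVec μ) (hν : IsProbVec ν) :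
    tvDist (μ ᵥ* A) (ν ᵥ* A) ≤ (1 - n * c) * tvDist μ ν := by
  unfold tvDist
  have hsum0 : ∑ i, (μ i - ν i) = 0 := by
    rw [Finset.sum_sub_distrib, hμ.2, hν.2]; ring
  have key : ∀ j, |(μ ᵥ* A) j - (ν ᵥ* A) j| ≤ ∑ i, |μ i - ν i| * (A i j - c) := by
    intro j
    have h1 : (μ ᵥ* A) j - (ν ᵥ* A) j = ∑ i, (μ i - ν i) * (A i j - c) := by
      have : ∑ i, (μ i - ν i) * (A i j - c)
          = ∑ i, (μ i - ν i) * A i j - c * ∑ i, (μ i - ν i) := by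
        rw [Finset.mul_sum, ← Finset.sum_sub_distrib]; congr 1; ext i; ring
      rw [this, hsum0]
      simp [Matrix.vecMul, dotProduct, ← Finset.sum_sub_distrib]
      congr 1; ext i; ring
    rw [h1]
    refine (Finset.abs_sum_le_sum_abs _ _).trans ?_
    refine Finset.sum_le_sum fun i _ => ?_
    rw [abs_mul, abs_of_nonneg (by linarith [hAc i j] : (0:ℝ) ≤ A i j - c)]
  calc (1:ℝ)/2 * ∑ j, |(μ ᵥ* A) j - (ν ᵥ* A) j|
      ≤ 1/2 * ∑ j, ∑ i, |μ i - ν i| * (A i j - c) := by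
        have := Finset.sum_le_sum fun j (_ : j ∈ Finset.univ) => key j
        linarith
    _ = (1 - n * c) * (1/2 * ∑ i, |μ i - ν i|) := by
        rw [Finset.sum_comm]
        have : ∀ i, ∑ j, |μ i - ν i| * (A i j - c) = |μ i - ν i| * (1 - n * c) := by
          intro i
          rw [← Finset.mul_sum, Finset.sum_sub_distrib, hA.2 i]
          simp [mul_comm]
        simp only [this]
        rw [← Finset.sum_mul]
        ring
    _ ≤ _ := le_refl _

section Lemmas
variable {n : ℕ} {P₀ P₁ : Matrix (Fin n) (Fin n) ℝ}

lemma stoch_Pt (hP₀ : IsStochastic P₀) (hP₁ : IsStochastic P₁) {t : ℝ}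
    (ht0 : 0 ≤ t) (ht1 : t ≤ 1) : IsStochastic (Pt P₀ P₁ t) := by
  constructor
  · intro i j
    simp only [Pt, Matrix.add_apply, Matrix.smul_apply, smul_eq_mul]
    have := hP₀.1 i j; have := hP₁.1 i j
    nlinarith
  · intro i
    simp only [Pt, Matrix.add_apply, Matrix.smul_apply, smul_eq_mul]
    rw [Finset.sum_add_distrib, ← Finset.mul_sum, ← Finset.mul_sum, hP₀.2 i, hP₁.2 i]
    ring

/-- single-step perturbation bound -/
lemma tvDist_vecMul_Pt (hP₀ : IsStochastic P₀) (hP₁ : IsStochastic P₁)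
    {w : Fin n → ℝ} (hw : IsProbVec w) (s t : ℝ) :
    tvDist (w ᵥ* Pt P₀ P₁ s) (w ᵥ* Pt P₀ P₁ t) ≤ |s - t| := by
  unfold tvDist
  have hdiff : ∀ i j, Pt P₀ P₁ s i j - Pt P₀ P₁ t i j = (t - s) * (P₀ i j - P₁ i j) := by
    intro i j
    simp only [Pt, Matrix.add_apply, Matrix.smul_apply, smul_eq_mul]
    ring
  have key : ∀ j, |(w ᵥ* Pt P₀ P₁ s) j - (w ᵥ* Pt P₀ P₁ t) j|
      ≤ ∑ i, w i * (|s - t| * |P₀ i j - P₁ i j|) := by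
    intro j
    have h1 : (w ᵥ* Pt P₀ P₁ s) j - (w ᵥ* Pt P₀ P₁ t) j
        = ∑ i, w i * ((t - s) * (P₀ i j - P₁ i j)) := by
      simp only [Matrix.vecMul, dotProduct, ← Finset.sum_sub_distrib]
      congr 1; ext i
      rw [← mul_sub, hdiff]
    rw [h1]
    refine (Finset.abs_sum_le_sum_abs _ _).trans ?_
    refine Finset.sum_le_sum fun i _ => ?_
    rw [abs_mul, abs_mul, abs_of_nonneg (hw.1 i), abs_sub_comm s t]
  have h2 : ∀ i j, |P₀ i j - P₁ i j| ≤ P₀ i j + P₁ i j := by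
    intro i j
    rw [abs_sub_le_iff]
    constructor <;> nlinarith [hP₀.1 i j, hP₁.1 i j]
  calc (1:ℝ)/2 * ∑ j, |(w ᵥ* Pt P₀ P₁ s) j - (w ᵥ* Pt P₀ P₁ t) j|
      ≤ 1/2 * ∑ j, ∑ i, w i * (|s - t| * |P₀ i j - P₁ i j|) := by
        have := Finset.sum_le_sum fun j (_ : j ∈ Finset.univ) => key j
        linarith
    _ ≤ 1/2 * ∑ j, ∑ i, w i * (|s - t| * (P₀ i j + P₁ i j)) := by
        have : ∀ j ∈ Finset.univ, ∑ i, w i * (|s - t| * |P₀ i j - P₁ i j|)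
            ≤ ∑ i, w i * (|s - t| * (P₀ i j + P₁ i j)) := by
          intro j _
          refine Finset.sum_le_sum fun i _ => ?_
          exact mul_le_mul_of_nonneg_left
            (mul_le_mul_of_nonneg_left (h2 i j) (abs_nonneg _)) (hw.1 i)
        have := Finset.sum_le_sum this
        linarith
    _ = |s - t| := by
        rw [Finset.sum_comm]
        have : ∀ i, ∑ j, w i * (|s - t| * (P₀ i j + P₁ i j)) = w i * (|s - t| * 2) := by
          intro i
          rw [← Finset.mul_sum, ← Finset.mul_sum, Finset.sum_add_distrib, hP₀.2 i, hP₁.2 i]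
          norm_num
        simp only [this]
        rw [← Finset.sum_mul, hw.2]
        ring

lemma tvDist_vecMul_pow_le {A : Matrix (Fin n) (Fin n) ℝ} (hA : IsStochastic A)
    {μ ν : Fin n → ℝ} (hμ : IsProbVec μ) (hν : IsProbVec ν) (r : ℕ) :
    tvDist (μ ᵥ* (A ^ r)) (ν ᵥ* (A ^ r)) ≤ tvDist μ ν := by
  induction r with
  | zero => simp
  | succ r ih =>
    rw [pow_succ]
    have h1 : ∀ w : Fin n → ℝ, w ᵥ* (A ^ r * A) = (w ᵥ* (A ^ r)) ᵥ* A := by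
      intro w; rw [← Matrix.vecMul_vecMul]
    rw [h1, h1]
    have := tvDist_vecMul_le hA (le_refl (0:ℝ)) (fun i j => hA.1 i j)
      (probVec_vecMul hμ (stoch_pow hA r)) (probVec_vecMul hν (stoch_pow hA r))
    simp only [Nat.cast_ofNat, mul_zero, sub_zero, one_mul] at this
    exact le_trans this ih

lemma tvDist_self (μ : Fin n → ℝ) : tvDist μ μ = 0 := by
  unfold tvDist; simp

lemma adiabProd_zero (T : ℕ) : adiabProd P₀ P₁ T 0 = 1 := by
  simp [adiabProd, prodSeg]

lemma adiabProd_succ (T j : ℕ) :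
    adiabProd P₀ P₁ T (j + 1)
      = adiabProd P₀ P₁ T j * Pt P₀ P₁ (((j : ℝ) + 1) / (T : ℝ)) := by
  unfold adiabProd prodSeg
  simp [List.range_succ]

lemma probVec_adiab (hP₀ : IsStochastic P₀) (hP₁ : IsStochastic P₁)
    {π₀ : Fin n → ℝ} (hπ₀ : IsProbVec π₀) {T : ℕ} (hT0 : 0 < T) :
    ∀ j : ℕ, j ≤ T → IsProbVec (π₀ ᵥ* adiabProd P₀ P₁ T j) := by
  intro j
  induction j with
  | zero => intro _; simpa [adiabProd_zero] using hπ₀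
  | succ j ih =>
    intro hj
    rw [adiabProd_succ, ← Matrix.vecMul_vecMul]
    refine probVec_vecMul (ih (by omega)) (stoch_Pt hP₀ hP₁ ?_ ?_)
    · positivity
    · rw [div_le_one (by exact_mod_cast hT0)]
      push_cast
      exact_mod_cast Nat.cast_le.mpr hj

/-- Telescoping: replacing the last `r` factors by `Q = P_{k/T}`. -/
lemma telescope (hP₀ : IsStochastic P₀) (hP₁ : IsStochastic P₁)
    {π₀ : Fin n → ℝ} (hπ₀ : IsProbVec π₀) {T k : ℕ} (hT0 : 0 < T) (hkT : k ≤ T) :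
    ∀ r : ℕ, r ≤ k →
      tvDist ((π₀ ᵥ* adiabProd P₀ P₁ T (k - r)) ᵥ* (Pt P₀ P₁ ((k : ℝ)/(T : ℝ))) ^ r)
        (π₀ ᵥ* adiabProd P₀ P₁ T k) ≤ (∑ i ∈ Finset.range r, (i : ℝ)) / (T : ℝ) := by
  have hTpos : (0:ℝ) < (T:ℝ) := by exact_mod_cast hT0
  have hQ : IsStochastic (Pt P₀ P₁ ((k : ℝ)/(T : ℝ))) :=
    stoch_Pt hP₀ hP₁ (by positivity) (by rw [div_le_one hTpos]; exact_mod_cast hkT)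
  intro r
  induction r with
  | zero =>
    intro _
    simp [tvDist_self]
  | succ r ih =>
    intro hr
    have hr' : r ≤ k := by omega
    have hkr : k - r = (k - (r+1)) + 1 := by omega
    have hstep : π₀ ᵥ* adiabProd P₀ P₁ T (k - r)
        = (π₀ ᵥ* adiabProd P₀ P₁ T (k - (r+1))) ᵥ* Pt P₀ P₁ (((k:ℝ) - (r:ℝ))/(T:ℝ)) := by
      rw [hkr, adiabProd_succ, ← Matrix.vecMul_vecMul]
      congr 2
      push_cast [Nat.cast_sub (show r + 1 ≤ k from hr)]
      ring_nf
    have hμ' : IsProbVec (π₀ ᵥ* adiabProd P₀ P₁ T (k - (r+1))) :=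
      probVec_adiab hP₀ hP₁ hπ₀ hT0 _ (by omega)
    set μ' := π₀ ᵥ* adiabProd P₀ P₁ T (k - (r+1)) with hμ'def
    have hpow : μ' ᵥ* (Pt P₀ P₁ ((k : ℝ)/(T : ℝ))) ^ (r+1)
        = (μ' ᵥ* Pt P₀ P₁ ((k : ℝ)/(T : ℝ))) ᵥ* (Pt P₀ P₁ ((k : ℝ)/(T : ℝ))) ^ r := by
      rw [pow_succ', ← Matrix.vecMul_vecMul]
    have h1 : tvDist (μ' ᵥ* (Pt P₀ P₁ ((k : ℝ)/(T : ℝ))) ^ (r+1))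
        ((π₀ ᵥ* adiabProd P₀ P₁ T (k - r)) ᵥ* (Pt P₀ P₁ ((k : ℝ)/(T : ℝ))) ^ r)
        ≤ (r : ℝ) / (T : ℝ) := by
      rw [hpow, hstep]
      refine le_trans (tvDist_vecMul_pow_le hQ
        (probVec_vecMul hμ' hQ)
        (probVec_vecMul hμ' (stoch_Pt hP₀ hP₁ ?_ ?_)) r) ?_
      · have h : (r:ℝ) ≤ (k:ℝ) := by exact_mod_cast hr'
        exact div_nonneg (by linarith) (le_of_lt hTpos)
      · rw [div_le_one hTpos]
        have : (k:ℝ) ≤ (T:ℝ) := by exact_mod_cast hkT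
        linarith [show (0:ℝ) ≤ (r:ℝ) from Nat.cast_nonneg r]
      · refine le_trans (tvDist_vecMul_Pt hP₀ hP₁ hμ' _ _) ?_
        rw [div_sub_div_same, abs_div, abs_of_nonneg (le_of_lt hTpos)]
        rw [show (k:ℝ) - ((k:ℝ) - (r:ℝ)) = (r:ℝ) by ring, abs_of_nonneg (Nat.cast_nonneg r)]
    have h2 := ih hr'
    have htri := tvDist_triangle (μ' ᵥ* (Pt P₀ P₁ ((k : ℝ)/(T : ℝ))) ^ (r+1))
      ((π₀ ᵥ* adiabProd P₀ P₁ T (k - r)) ᵥ* (Pt P₀ P₁ ((k : ℝ)/(T : ℝ))) ^ r)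
      (π₀ ᵥ* adiabProd P₀ P₁ T k)
    rw [Finset.sum_range_succ]
    rw [add_div]
    calc tvDist (μ' ᵥ* (Pt P₀ P₁ ((k : ℝ)/(T : ℝ))) ^ (r+1)) (π₀ ᵥ* adiabProd P₀ P₁ T k)
        ≤ (r : ℝ) / (T : ℝ) + (∑ i ∈ Finset.range r, (i : ℝ)) / (T : ℝ) := by linarith
      _ = (∑ i ∈ Finset.range r, (i : ℝ)) / (T : ℝ) + (r:ℝ) / (T:ℝ) := by ring

lemma pow_entry_pos_of_irr_aper {P : Matrix (Fin n) (Fin n) ℝ}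
    (hP : IsStochastic P) (hi : MCIrreducible P) (ha : MCAperiodic P) :
    ∃ N : ℕ, ∀ i j, 0 < (P ^ N) i j := by
  classical
  -- choose reach times and aperiodicity thresholds
  choose m hm using hi
  choose Na hNa using ha
  set M : ℕ := Finset.sup Finset.univ (fun p : Fin n × Fin n => m p.1 p.2) with hM
  set NA : ℕ := Finset.sup Finset.univ (fun i : Fin n => Na i) with hNA
  refine ⟨M + NA, fun i j => ?_⟩
  have hmij : m i j ≤ M := Finset.le_sup (f := fun p : Fin n × Fin n => m p.1 p.2) (Finset.mem_univ (i, j))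
  have hNai : Na i ≤ NA := Finset.le_sup (f := Na) (Finset.mem_univ i)
  have hsplit : M + NA = (M + NA - m i j) + m i j := by omega
  have hii : 0 < (P ^ (M + NA - m i j)) i i := by
    apply hNa i
    omega
  have hij : 0 < (P ^ (m i j)) i j := hm i j
  rw [hsplit, pow_add]
  have : (P ^ (M + NA - m i j)) i i * (P ^ (m i j)) i j
      ≤ ((P ^ (M + NA - m i j)) * (P ^ (m i j))) i j := by
    rw [Matrix.mul_apply]
    refine Finset.single_le_sum (f := fun l => (P ^ (M + NA - m i j)) i l * (P ^ (m i j)) l j)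
      (fun l _ => mul_nonneg ((stoch_pow hP _).1 i l) ((stoch_pow hP _).1 l j))
      (Finset.mem_univ i)
  exact lt_of_lt_of_le (mul_pos hii hij) this

/-- entrywise monotonicity of powers for nonneg matrices -/
lemma pow_entry_le {A B : Matrix (Fin n) (Fin n) ℝ}
    (hA0 : ∀ i j, 0 ≤ A i j) (hAB : ∀ i j, A i j ≤ B i j) (N : ℕ) :
    ∀ i j, (A ^ N) i j ≤ (B ^ N) i j := by
  have hApow : ∀ N i j, 0 ≤ (A ^ N) i j := by
    intro N
    induction N with
    | zero => intro i j; by_cases h : i = j <;> simp [Matrix.one_apply, h]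
    | succ N ih =>
      intro i j
      rw [pow_succ, Matrix.mul_apply]
      exact Finset.sum_nonneg fun l _ => mul_nonneg (ih i l) (hA0 l j)
  induction N with
  | zero => intro i j; simp
  | succ N ih =>
    intro i j
    rw [pow_succ, pow_succ, Matrix.mul_apply, Matrix.mul_apply]
    refine Finset.sum_le_sum fun l _ => ?_
    exact mul_le_mul (ih i l) (hAB l j) (hA0 l j) (le_trans (hApow N i l) (ih i l))

lemma stoch_mul_entry_lb {A B : Matrix (Fin n) (Fin n) ℝ} (hA : IsStochastic A)
    (hB0 : ∀ i j, 0 ≤ B i j) {c : ℝ} (hc : 0 ≤ c) (hBc : ∀ i j, c ≤ B i j) :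
    ∀ i j, c ≤ (A * B) i j := by
  intro i j
  rw [Matrix.mul_apply]
  calc c = ∑ l, A i l * c := by rw [← Finset.sum_mul, hA.2 i, one_mul]
    _ ≤ ∑ l, A i l * B l j :=
      Finset.sum_le_sum fun l _ => mul_le_mul_of_nonneg_left (hBc l j) (hA.1 i l)

/-- Uniform Doeblin minorization for the interpolated family. -/
lemma uniform_doeblin (hn : 1 ≤ n)
    (hP₀ : IsStochastic P₀) (hP₀i : MCIrreducible P₀) (hP₀a : MCAperiodic P₀)
    (hP₁ : IsStochastic P₁) (hP₁i : MCIrreducible P₁) (hP₁a : MCAperiodic P₁) :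
    ∃ N : ℕ, ∃ c : ℝ, 0 < c ∧
      ∀ s ∈ Set.Icc (0:ℝ) 1, ∀ i j, c ≤ ((Pt P₀ P₁ s) ^ N) i j := by
  classical
  obtain ⟨N₀, hN₀⟩ := pow_entry_pos_of_irr_aper hP₀ hP₀i hP₀a
  obtain ⟨N₁, hN₁⟩ := pow_entry_pos_of_irr_aper hP₁ hP₁i hP₁a
  have hne : (Finset.univ : Finset (Fin n × Fin n)).Nonempty := by
    refine ⟨(⟨0, hn⟩, ⟨0, hn⟩), Finset.mem_univ _⟩
  set c₀ : ℝ := (1/2)^N₀ * Finset.min' (Finset.image (fun p : Fin n × Fin n => (P₀ ^ N₀) p.1 p.2) Finset.univ) (hne.image _) with hc₀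
  set c₁ : ℝ := (1/2)^N₁ * Finset.min' (Finset.image (fun p : Fin n × Fin n => (P₁ ^ N₁) p.1 p.2) Finset.univ) (hne.image _) with hc₁
  have hc₀pos : 0 < c₀ := by
    apply mul_pos (by positivity)
    obtain ⟨p, -, hp⟩ := Finset.mem_image.mp
      (Finset.min'_mem _ (hne.image (fun p : Fin n × Fin n => (P₀ ^ N₀) p.1 p.2)))
    rw [← hp]; exact hN₀ p.1 p.2
  have hc₁pos : 0 < c₁ := by
    apply mul_pos (by positivity)
    obtain ⟨p, -, hp⟩ := Finset.mem_image.mp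
      (Finset.min'_mem _ (hne.image (fun p : Fin n × Fin n => (P₁ ^ N₁) p.1 p.2)))
    rw [← hp]; exact hN₁ p.1 p.2
  have hmin₀ : ∀ i j, c₀ ≤ (1/2:ℝ)^N₀ * (P₀ ^ N₀) i j := by
    intro i j
    rw [hc₀]
    apply mul_le_mul_of_nonneg_left _ (by positivity)
    exact Finset.min'_le _ _ (Finset.mem_image.mpr ⟨(i, j), Finset.mem_univ _, rfl⟩)
  have hmin₁ : ∀ i j, c₁ ≤ (1/2:ℝ)^N₁ * (P₁ ^ N₁) i j := by
    intro i j
    rw [hc₁]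
    apply mul_le_mul_of_nonneg_left _ (by positivity)
    exact Finset.min'_le _ _ (Finset.mem_image.mpr ⟨(i, j), Finset.mem_univ _, rfl⟩)
  refine ⟨max N₀ N₁, min c₀ c₁, lt_min hc₀pos hc₁pos, fun s hs i j => ?_⟩
  have hPts : IsStochastic (Pt P₀ P₁ s) := stoch_Pt hP₀ hP₁ hs.1 hs.2
  -- key: for the relevant Pᵤ (u = 0 or 1), (Pt s)^(max N₀ N₁) ≥ cᵤ entrywise
  have main : ∀ (P : Matrix (Fin n) (Fin n) ℝ) (hP : IsStochastic P) (Np : ℕ)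
      (hNp : Np ≤ max N₀ N₁)
      (hlb : ∀ i j, (1/2:ℝ) * P i j ≤ Pt P₀ P₁ s i j) (cp : ℝ) (hcp : 0 ≤ cp)
      (hcpP : ∀ i j, cp ≤ (1/2:ℝ)^Np * (P ^ Np) i j),
      ∀ i j, cp ≤ ((Pt P₀ P₁ s) ^ (max N₀ N₁)) i j := by
    intro P hP Np hNp hlb cp hcp hcpP i j
    have h1 : ∀ i j, cp ≤ ((Pt P₀ P₁ s) ^ Np) i j := by
      intro i j
      have hle := pow_entry_le (A := (1/2:ℝ) • P) (B := Pt P₀ P₁ s)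
        (fun i j => by
          simp only [Matrix.smul_apply, smul_eq_mul]
          linarith [hP.1 i j])
        (fun i j => by simpa using hlb i j) Np i j
      have heq : (((1/2:ℝ) • P) ^ Np) i j = (1/2:ℝ)^Np * (P ^ Np) i j := by
        rw [smul_pow, Matrix.smul_apply, smul_eq_mul]
      rw [heq] at hle
      exact le_trans (hcpP i j) hle
    have hsplit : (Pt P₀ P₁ s) ^ (max N₀ N₁)
        = (Pt P₀ P₁ s) ^ (max N₀ N₁ - Np) * (Pt P₀ P₁ s) ^ Np := by
      rw [← pow_add]; congr 1; omega
    rw [hsplit]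
    exact stoch_mul_entry_lb (stoch_pow hPts _) (stoch_pow hPts Np).1 hcp h1 i j
  rcases le_or_gt s (1/2) with hhalf | hhalf
  · refine le_trans (min_le_left _ _) (main P₀ hP₀ N₀ (le_max_left _ _) ?_ c₀ (le_of_lt hc₀pos) hmin₀ i j)
    intro i j
    simp only [Pt, Matrix.add_apply, Matrix.smul_apply, smul_eq_mul]
    have := hP₀.1 i j; have := hP₁.1 i j
    nlinarith [hs.1, hs.2]
  · refine le_trans (min_le_right _ _) (main P₁ hP₁ N₁ (le_max_right _ _) ?_ c₁ (le_of_lt hc₁pos) hmin₁ i j)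
    intro i j
    simp only [Pt, Matrix.add_apply, Matrix.smul_apply, smul_eq_mul]
    have := hP₀.1 i j; have := hP₁.1 i j
    nlinarith [hs.1, hs.2]

lemma stationary_pow {Q : Matrix (Fin n) (Fin n) ℝ} {π' : Fin n → ℝ}
    (hst : π' ᵥ* Q = π') (m : ℕ) : π' ᵥ* (Q ^ m) = π' := by
  induction m with
  | zero => simp
  | succ m ih => rw [pow_succ', ← Matrix.vecMul_vecMul, hst, ih]

lemma doeblin_pow_contract {Q : Matrix (Fin n) (Fin n) ℝ} (hQ : IsStochastic Q)
    {c : ℝ} (hc : 0 ≤ c) (hnc : (n:ℝ) * c ≤ 1) (hQc : ∀ i j, c ≤ Q i j)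
    {μ ν : Fin n → ℝ} (hμ : IsProbVec μ) (hν : IsProbVec ν) (m : ℕ) :
    tvDist (μ ᵥ* Q ^ m) (ν ᵥ* Q ^ m) ≤ (1 - (n:ℝ) * c) ^ m * tvDist μ ν := by
  induction m with
  | zero => simp
  | succ m ih =>
    have h1 : ∀ w : Fin n → ℝ, w ᵥ* Q ^ (m+1) = (w ᵥ* Q ^ m) ᵥ* Q := by
      intro w; rw [pow_succ, ← Matrix.vecMul_vecMul]
    rw [h1, h1]
    have hstep := tvDist_vecMul_le hQ hc hQc
      (probVec_vecMul hμ (stoch_pow hQ m)) (probVec_vecMul hν (stoch_pow hQ m))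
    calc tvDist ((μ ᵥ* Q ^ m) ᵥ* Q) ((ν ᵥ* Q ^ m) ᵥ* Q)
        ≤ (1 - (n:ℝ)*c) * tvDist (μ ᵥ* Q ^ m) (ν ᵥ* Q ^ m) := hstep
      _ ≤ (1 - (n:ℝ)*c) * ((1 - (n:ℝ)*c) ^ m * tvDist μ ν) :=
          mul_le_mul_of_nonneg_left ih (by linarith)
      _ = (1 - (n:ℝ)*c) ^ (m+1) * tvDist μ ν := by ring

lemma doeblin_mix {Q : Matrix (Fin n) (Fin n) ℝ} (hQ : IsStochastic Q)
    {π' : Fin n → ℝ} (hπ' : IsProbVec π') (hst : π' ᵥ* Q = π')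
    {N m : ℕ} {c ε' : ℝ} (hc0 : 0 ≤ c) (hnc : (n:ℝ) * c ≤ 1)
    (hQN : ∀ i j, c ≤ (Q ^ N) i j) (hm : (1 - (n:ℝ)*c) ^ m ≤ ε') :
    ∀ ν : Fin n → ℝ, IsProbVec ν → tvDist (ν ᵥ* Q ^ (N * m)) π' ≤ ε' := by
  intro ν hν
  have hQN' : IsStochastic (Q ^ N) := stoch_pow hQ N
  have hstN : π' ᵥ* (Q ^ N) = π' := stationary_pow hst N
  rw [pow_mul]
  have hcontr := doeblin_pow_contract hQN' hc0 hnc hQN hν hπ' m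
  rw [stationary_pow hstN m] at hcontr
  have h1 : tvDist ν π' ≤ 1 := tvDist_le_one hν hπ'
  have h2 : (0:ℝ) ≤ (1 - (n:ℝ)*c) ^ m := pow_nonneg (by linarith) m
  calc tvDist (ν ᵥ* (Q ^ N) ^ m) π' ≤ (1 - (n:ℝ)*c) ^ m * tvDist ν π' := hcontr
    _ ≤ (1 - (n:ℝ)*c) ^ m * 1 := mul_le_mul_of_nonneg_left h1 h2
    _ ≤ ε' := by linarith

lemma mixSet_mono {Q : Matrix (Fin n) (Fin n) ℝ} (hQ : IsStochastic Q)
    {π' : Fin n → ℝ} {ε' : ℝ} {T₀ T₁ : ℕ} (h : T₀ ≤ T₁)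
    (hT₀ : ∀ ν : Fin n → ℝ, IsProbVec ν → tvDist (ν ᵥ* Q ^ T₀) π' ≤ ε') :
    ∀ ν : Fin n → ℝ, IsProbVec ν → tvDist (ν ᵥ* Q ^ T₁) π' ≤ ε' := by
  intro ν hν
  have : Q ^ T₁ = Q ^ (T₁ - T₀) * Q ^ T₀ := by rw [← pow_add]; congr 1; omega
  rw [this, ← Matrix.vecMul_vecMul]
  exact hT₀ _ (probVec_vecMul hν (stoch_pow hQ _))

end Lemmas

set_option maxHeartbeats 1000000 in
/-- For δ ∈ (0,1], ε > 0, every integer T ≥ 2 t_mix(ε/2)²/(εδ) and every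
integer k with δ ≤ k/T ≤ 1, `‖π₀ P_{1/T} ⋯ P_{k/T} − π_{k/T}‖_TV ≤ ε`. -/
theorem stmt_2 {n : ℕ} (hn : 1 ≤ n) (P₀ P₁ : Matrix (Fin n) (Fin n) ℝ)
    (hP₀ : IsStochastic P₀) (hP₀i : MCIrreducible P₀) (hP₀a : MCAperiodic P₀)
    (hP₁ : IsStochastic P₁) (hP₁i : MCIrreducible P₁) (hP₁a : MCAperiodic P₁)
    (π : ℝ → Fin n → ℝ)
    (hπ : ∀ t ∈ Set.Icc (0 : ℝ) 1, IsProbVec (π t) ∧ (π t) ᵥ* (Pt P₀ P₁ t) = π t)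
    (δ : ℝ) (hδ0 : 0 < δ) (hδ1 : δ ≤ 1) (ε : ℝ) (hε : 0 < ε)
    (T : ℕ)
    (hT : 2 * (maxMixingTime P₀ P₁ π (ε / 2) : ℝ) ^ 2 / (ε * δ) ≤ (T : ℝ))
    (k : ℕ) (hk1 : δ ≤ (k : ℝ) / (T : ℝ)) (hk2 : (k : ℝ) / (T : ℝ) ≤ 1) :
    tvDist ((π 0) ᵥ* adiabProd P₀ P₁ T k) (π ((k : ℝ) / (T : ℝ))) ≤ ε := by
  -- basic positivity facts
  have hε2 : (0:ℝ) < ε / 2 := by linarith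
  have hT0 : 0 < T := by
    by_contra h
    have : T = 0 := by omega
    rw [this] at hk1
    norm_num at hk1
    linarith
  have hTpos : (0:ℝ) < (T:ℝ) := by exact_mod_cast hT0
  have hkT : k ≤ T := by
    have : (k:ℝ) ≤ (T:ℝ) := by
      have := (div_le_one hTpos).mp hk2
      exact this
    exact_mod_cast this
  have ht : (k:ℝ)/(T:ℝ) ∈ Set.Icc (0:ℝ) 1 := ⟨by positivity, hk2⟩
  have h0 : (0:ℝ) ∈ Set.Icc (0:ℝ) 1 := ⟨le_refl _, zero_le_one⟩
  have hπ0 : IsProbVec (π 0) := (hπ 0 h0).1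
  have hπt : IsProbVec (π ((k:ℝ)/(T:ℝ))) := (hπ _ ht).1
  have hπtst : (π ((k:ℝ)/(T:ℝ))) ᵥ* Pt P₀ P₁ ((k:ℝ)/(T:ℝ)) = π ((k:ℝ)/(T:ℝ)) := (hπ _ ht).2
  have hμk : IsProbVec (π 0 ᵥ* adiabProd P₀ P₁ T k) := probVec_adiab hP₀ hP₁ hπ0 hT0 k hkT
  rcases le_or_gt 1 ε with hε1 | hε1
  · exact le_trans (tvDist_le_one hμk hπt) hε1
  -- main case : ε < 1
  obtain ⟨N, c, hcpos, hdoeb⟩ := uniform_doeblin hn hP₀ hP₀i hP₀a hP₁ hP₁i hP₁a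
  have hQ : IsStochastic (Pt P₀ P₁ ((k:ℝ)/(T:ℝ))) := stoch_Pt hP₀ hP₁ ht.1 ht.2
  -- n·c ≤ 1 via row sums of (Pt 0)^N
  have hnc : (n:ℝ) * c ≤ 1 := by
    have hP00 : IsStochastic (Pt P₀ P₁ 0) := stoch_Pt hP₀ hP₁ (le_refl _) zero_le_one
    have hPN : IsStochastic ((Pt P₀ P₁ 0) ^ N) := stoch_pow hP00 N
    set i0 : Fin n := ⟨0, hn⟩
    have := hPN.2 i0
    have hge : ∑ j, ((Pt P₀ P₁ 0) ^ N) i0 j ≥ ∑ j : Fin n, c :=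
      Finset.sum_le_sum fun j _ => hdoeb 0 h0 i0 j
    rw [this] at hge
    simpa [mul_comm] using hge
  have h1c0 : (0:ℝ) ≤ 1 - (n:ℝ)*c := by linarith
  have h1c1 : 1 - (n:ℝ)*c < 1 := by
    have hn' : (1:ℝ) ≤ (n:ℝ) := by exact_mod_cast hn
    nlinarith
  -- choose m with (1-nc)^m ≤ ε/2
  obtain ⟨m, hm⟩ := exists_pow_lt_of_lt_one hε2 h1c1
  -- uniform mixing-time bound Tu = N*m
  have hTu : ∀ s ∈ Set.Icc (0:ℝ) 1, ∀ ν : Fin n → ℝ, IsProbVec ν →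
      tvDist (ν ᵥ* (Pt P₀ P₁ s) ^ (N*m)) (π s) ≤ ε/2 := by
    intro s hs ν hν
    exact doeblin_mix (stoch_Pt hP₀ hP₁ hs.1 hs.2) (hπ s hs).1 (hπ s hs).2
      (le_of_lt hcpos) hnc (hdoeb s hs) (le_of_lt hm) ν hν
  have hmix_le : ∀ s ∈ Set.Icc (0:ℝ) 1, mixingTime (Pt P₀ P₁ s) (π s) (ε/2) ≤ N*m :=
    fun s hs => Nat.sInf_le (hTu s hs)
  -- maxMixingTime facts
  set tm : ℕ := maxMixingTime P₀ P₁ π (ε/2) with htmdef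
  have hbdd : BddAbove {mt : ℕ | ∃ s ∈ Set.Icc (0:ℝ) 1, mt = mixingTime (Pt P₀ P₁ s) (π s) (ε/2)} := by
    refine ⟨N*m, fun x hx => ?_⟩
    obtain ⟨s, hs, rfl⟩ := hx
    exact hmix_le s hs
  have htm_ge : mixingTime (Pt P₀ P₁ ((k:ℝ)/(T:ℝ))) (π ((k:ℝ)/(T:ℝ))) (ε/2) ≤ tm :=
    le_csSup hbdd ⟨(k:ℝ)/(T:ℝ), ht, rfl⟩
  -- sInf membership : the mixing time itself satisfies the property
  have hSne : {TT : ℕ | ∀ ν : Fin n → ℝ, IsProbVec ν →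
      tvDist (ν ᵥ* (Pt P₀ P₁ ((k:ℝ)/(T:ℝ))) ^ TT) (π ((k:ℝ)/(T:ℝ))) ≤ ε/2}.Nonempty :=
    ⟨N*m, hTu _ ht⟩
  have hmem := Nat.sInf_mem hSne
  have htm_mix : ∀ ν : Fin n → ℝ, IsProbVec ν →
      tvDist (ν ᵥ* (Pt P₀ P₁ ((k:ℝ)/(T:ℝ))) ^ tm) (π ((k:ℝ)/(T:ℝ))) ≤ ε/2 :=
    mixSet_mono hQ htm_ge hmem
  -- tm ≤ k
  have hδT : δ * (T:ℝ) ≤ (k:ℝ) := by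
    have := hk1
    rw [le_div_iff₀ hTpos] at this
    exact this
  have hT2 : 2 * (tm:ℝ)^2 ≤ (T:ℝ) * (ε * δ) := by
    have hεδ : (0:ℝ) < ε * δ := mul_pos hε hδ0
    rw [div_le_iff₀ hεδ] at hT
    exact hT
  have htmk_r : (tm:ℝ) ≤ (k:ℝ) := by
    have h2k : 2 * (tm:ℝ)^2 / ε ≤ (k:ℝ) := by
      rw [div_le_iff₀ hε]
      nlinarith
    rcases Nat.eq_zero_or_pos tm with h | h
    · simp [h]
    · have h1 : (1:ℝ) ≤ (tm:ℝ) := by exact_mod_cast h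
      nlinarith
  have htmk : tm ≤ k := by exact_mod_cast htmk_r
  -- telescoping
  have htel := telescope hP₀ hP₁ hπ0 hT0 hkT tm htmk
  -- mixing applied to μ_{k-tm}
  have hμ' : IsProbVec (π 0 ᵥ* adiabProd P₀ P₁ T (k - tm)) :=
    probVec_adiab hP₀ hP₁ hπ0 hT0 _ (by omega)
  have hmix := htm_mix _ hμ'
  -- sum bound
  have hsum : (∑ i ∈ Finset.range tm, (i:ℝ)) / (T:ℝ) ≤ ε/2 := by
    have h1 : (∑ i ∈ Finset.range tm, (i:ℝ)) ≤ (tm:ℝ) * (tm:ℝ) := by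
      calc (∑ i ∈ Finset.range tm, (i:ℝ)) ≤ ∑ i ∈ Finset.range tm, (tm:ℝ) :=
          Finset.sum_le_sum fun i hi => by
            exact_mod_cast le_of_lt (Finset.mem_range.mp hi)
        _ = (tm:ℝ) * (tm:ℝ) := by
          rw [Finset.sum_const, Finset.card_range]
          push_cast
          ring
    rw [div_le_iff₀ hTpos]
    have hδ1' : ε * δ ≤ ε := by nlinarith
    nlinarith
  -- combine via triangle inequality
  have htri := tvDist_triangle (π 0 ᵥ* adiabProd P₀ P₁ T k)
    ((π 0 ᵥ* adiabProd P₀ P₁ T (k - tm)) ᵥ* (Pt P₀ P₁ ((k:ℝ)/(T:ℝ))) ^ tm)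
    (π ((k:ℝ)/(T:ℝ)))
  have hsym : tvDist (π 0 ᵥ* adiabProd P₀ P₁ T k)
      ((π 0 ᵥ* adiabProd P₀ P₁ T (k - tm)) ᵥ* (Pt P₀ P₁ ((k:ℝ)/(T:ℝ))) ^ tm)
      = tvDist ((π 0 ᵥ* adiabProd P₀ P₁ T (k - tm)) ᵥ* (Pt P₀ P₁ ((k:ℝ)/(T:ℝ))) ^ tm)
      (π 0 ᵥ* adiabProd P₀ P₁ T k) := by
    unfold tvDist
    congr 1
    exact Finset.sum_congr rfl fun i _ => abs_sub_comm _ _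
  rw [hsym] at htri
  linarith
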